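/- arXiv:1205.1277 — 4 statements merged into one kernel-verified Lean document; each statement's English description precedes it below -/
import Mathlib

section
/- Let C be a linear code in F_q^N with dual code C^⊥. Then the Hamming weight enumerators satisfy W_{C^⊥}(X,Y) = (1/|C|) · W_C(X + (q-1)Y, X - Y). -/
open Finset
open scoped Classical BigOperators

variable {Fq : Type} [Field Fq] [Fintype Fq]

noncomputable def wt {N : ℕ} (c : Fin N → Fq) : ℕ := (Finset.univ.filter fun j => c j ≠ 0).card

def dualCode {N : ℕ} (C : Submodule Fq (Fin N → Fq)) : Submodule Fq (Fin N → Fq) where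
  carrier := {v | ∀ u ∈ C, ∑ j, u j * v j = 0}
  add_mem' := by
    intro a b ha hb u hu
    have h1 := ha u hu
    have h2 := hb u hu
    have : ∀ j, u j * (a + b) j = u j * a j + u j * b j := fun j => by
      simp [Pi.add_apply, mul_add]
    simp only [Set.mem_setOf_eq, this, Finset.sum_add_distrib, h1, h2, add_zero]
  zero_mem' := by intro u hu; simp
  smul_mem' := by
    intro r v hv u hu
    have h := hv u hu
    have : ∀ j, u j * (r • v) j = r * (u j * v j) := fun j => by
      simp [Pi.smul_apply, smul_eq_mul]; ring
    simp only [Set.mem_setOf_eq, this, ← Finset.mul_sum, h, mul_zero]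

noncomputable def W {N : ℕ} (C : Submodule Fq (Fin N → Fq)) (X Y : ℂ) : ℂ :=
  ∑ c : C, X ^ (N - wt (c : Fin N → Fq)) * Y ^ wt (c : Fin N → Fq)

noncomputable def effLen {N m : ℕ} (c : Fin m → Fin N → Fq) : ℕ :=
  (Finset.univ.filter fun j => ∃ i, c i j ≠ 0).card

noncomputable def Wm {N m : ℕ} (Cs : Fin m → Submodule Fq (Fin N → Fq)) (X Y : ℂ) : ℂ :=
  ∑ c : (Π i, Cs i), X ^ (N - effLen fun i => (c i : Fin N → Fq)) *
    Y ^ effLen (fun i => (c i : Fin N → Fq))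

noncomputable def suppWt {N : ℕ} (V : Submodule Fq (Fin N → Fq)) : ℕ :=
  (Finset.univ.filter fun j => ∃ v ∈ V, v j ≠ 0).card

noncomputable def Wr {N : ℕ} (C : Submodule Fq (Fin N → Fq)) (r : ℕ) (X Y : ℂ) : ℂ :=
  ∑ᶠ D ∈ {D : Submodule Fq (Fin N → Fq) | D ≤ C ∧ Module.finrank Fq D = r},
    X ^ (N - suppWt D) * Y ^ suppWt D

/-! Fix a nontrivial additive character `ψ` of `F_q` and put `m(v) = X ^ (N - wt v) * Y ^ wt v`.
Summing `ψ (u ⬝ᵥ v) * m(v)` over `u ∈ C` and all `v` in the two possible orders gives the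
identity: summing over `u` first yields `|C|` or `0` according as `v ∈ C^⊥` or not, while summing
over `v` first factors over the coordinates, each of which contributes `X + (q - 1) Y` if
`u j = 0` and `X - Y` otherwise. -/

open Matrix

theorem prod_ite_eq_zero_eq_pow_wt {K : Type} {M : Type*} [Field K] [CommMonoid M] {N : ℕ}
    (c : Fin N → K) (A B : M) :
    ∏ j, (if c j = 0 then A else B) = A ^ (N - wt c) * B ^ wt c := by
  rw [Finset.prod_ite, Finset.prod_const, Finset.prod_const, wt, Finset.filter_not,
    Finset.card_sdiff_of_subset (Finset.filter_subset _ _), card_univ, Fintype.card_fin,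
    Nat.sub_sub_self ((card_filter_le _ _).trans_eq (by simp))]

theorem AddChar.map_sum_eq_prod {A M ι : Type*} [AddCommMonoid A] [CommMonoid M]
    (ψ : AddChar A M) (s : Finset ι) (f : ι → A) :
    ψ (∑ i ∈ s, f i) = ∏ i ∈ s, ψ (f i) :=
  map_prod ψ.toMonoidHom (fun i => Multiplicative.ofAdd (f i)) s

theorem AddChar.sum_apply_linearMap_eq_ite {K V R : Type*} [Field K] [AddCommGroup V]
    [Module K V] [Fintype V] [CommRing R] [IsDomain R] {ψ : AddChar K R} (hψ : ψ ≠ 1)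
    (f : V →ₗ[K] K) [Decidable (f = 0)] :
    ∑ v, ψ (f v) = if f = 0 then (Fintype.card V : R) else 0 := by
  split_ifs with hf
  · simp [hf]
  refine AddChar.sum_eq_zero_of_ne_one (ψ := ψ.compAddMonoidHom f.toAddMonoidHom) fun h => hψ ?_
  exact AddChar.compAddMonoidHom_injective_left _ (LinearMap.surjective hf)
    (h.trans (by ext; simp))

theorem sum_addChar_dotProduct_eq_ite {R : Type*} [CommRing R] [IsDomain R] {ψ : AddChar Fq R}
    (hψ : ψ ≠ 1) {N : ℕ} (C : Submodule Fq (Fin N → Fq)) (v : Fin N → Fq) :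
    ∑ u : C, ψ ((u : Fin N → Fq) ⬝ᵥ v) =
      if v ∈ dualCode C then (Nat.card C : R) else 0 := by
  set f := ((dotProductBilin Fq Fq).flip v).comp C.subtype
  have hf : f = 0 ↔ v ∈ dualCode C := by
    simp [f, LinearMap.ext_iff, dualCode, dotProduct]
  simpa [f, hf, Nat.card_eq_fintype_card] using AddChar.sum_apply_linearMap_eq_ite hψ f

theorem sum_addChar_mul_mul_ite_eq_zero {R : Type*} [CommRing R] [IsDomain R]
    {ψ : AddChar Fq R} (hψ : ψ ≠ 1) (a : Fq) (X Y : R) :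
    ∑ t, ψ (a * t) * (if t = 0 then X else Y) =
      if a = 0 then X + ((Fintype.card Fq : R) - 1) * Y else X - Y := by
  have hsplit (t : Fq) : ψ (a * t) * (if t = 0 then X else Y) =
      ψ (t * a) * Y + if t = 0 then X - Y else 0 := by
    split_ifs with ht <;> simp [ht, mul_comm a]
  simp_rw [hsplit, Finset.sum_add_distrib, ← Finset.sum_mul,
    AddChar.sum_mulShift a (.of_ne_one hψ)]
  split_ifs
  · simp only [sum_ite_eq', mem_univ, ↓reduceIte]
    ring
  · simp

theorem sum_addChar_dotProduct_mul_weight {R : Type*} [CommRing R] [IsDomain R]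
    {ψ : AddChar Fq R} (hψ : ψ ≠ 1) {N : ℕ} (u : Fin N → Fq) (X Y : R) :
    ∑ v : Fin N → Fq, ψ (u ⬝ᵥ v) * (X ^ (N - wt v) * Y ^ wt v) =
      (X + ((Fintype.card Fq : R) - 1) * Y) ^ (N - wt u) * (X - Y) ^ wt u := by
  have hprod (v : Fin N → Fq) : ψ (u ⬝ᵥ v) * (X ^ (N - wt v) * Y ^ wt v) =
      ∏ j, ψ (u j * v j) * (if v j = 0 then X else Y) := by
    rw [Finset.prod_mul_distrib, prod_ite_eq_zero_eq_pow_wt, dotProduct, AddChar.map_sum_eq_prod]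
  simp_rw [hprod]
  rw [← Fintype.prod_sum fun j t => ψ (u j * t) * (if t = 0 then X else Y)]
  simp_rw [sum_addChar_mul_mul_ite_eq_zero hψ]
  exact prod_ite_eq_zero_eq_pow_wt u _ _

theorem macwilliams_identity {N : ℕ} (C : Submodule Fq (Fin N → Fq)) (X Y : ℂ) :
    W (dualCode C) X Y =
      (Nat.card C : ℂ)⁻¹ * W C (X + ((Fintype.card Fq : ℂ) - 1) * Y) (X - Y) := by
  obtain ⟨ψ, hψ⟩ : ∃ ψ : AddChar Fq ℂ, ψ ≠ 1 :=
    ⟨_, by simpa using AddChar.FiniteField.primitiveChar_to_Complex_isPrimitive Fq one_ne_zero⟩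
  have hC : (Nat.card C : ℂ) ≠ 0 := Nat.cast_ne_zero.mpr Nat.card_pos.ne'
  rw [eq_inv_mul_iff_mul_eq₀ hC]
  calc (Nat.card C : ℂ) * W (dualCode C) X Y
      = ∑ v : Fin N → Fq, (∑ u : C, ψ ((u : Fin N → Fq) ⬝ᵥ v)) *
          (X ^ (N - wt v) * Y ^ wt v) := by
        simp_rw [sum_addChar_dotProduct_eq_ite hψ, ite_mul, zero_mul, ← Finset.sum_filter,
          W, Finset.mul_sum]
        rw [← Finset.sum_subtype_eq_sum_filter, Finset.subtype_univ]
    _ = ∑ u : C, ∑ v : Fin N → Fq,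
          ψ ((u : Fin N → Fq) ⬝ᵥ v) * (X ^ (N - wt v) * Y ^ wt v) := by
        simp_rw [Finset.sum_mul]
        exact Finset.sum_comm
    _ = W C (X + ((Fintype.card Fq : ℂ) - 1) * Y) (X - Y) := by
        simp_rw [sum_addChar_dotProduct_mul_weight hψ]
        rfl
end

section
/- Let C_1,...,C_m be linear codes in F_q^N with duals C_1^⊥,...,C_m^⊥. Then the m-tuple Hamming weight enumerators satisfy W^{[m]}_{C_1^⊥,...,C_m^⊥}(X,Y) = (1/∏_{i=1}^m |C_i|) · W^{[m]}_{C_1,...,C_m}(X + (q^m - 1)Y, X - Y). -/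
open Finset
open scoped Classical BigOperators

variable {Fq : Type} [Field Fq] [Fintype Fq]

set_option linter.unusedSectionVars false

lemma mw_map_sum {A : Type*} [AddCommMonoid A] (ψ : AddChar A ℂ) {ι : Type*} (s : Finset ι)
    (f : ι → A) : ψ (∑ i ∈ s, f i) = ∏ i ∈ s, ψ (f i) := by
  induction s using Finset.cons_induction with
  | empty => simp
  | cons a s ha ih => rw [Finset.sum_cons, Finset.prod_cons, AddChar.map_add_eq_mul, ih]

lemma mw_mem_dual {N : ℕ} (C : Submodule Fq (Fin N → Fq)) (v : Fin N → Fq) :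
    v ∈ dualCode C ↔ ∀ u ∈ C, ∑ j, u j * v j = 0 := Iff.rfl

lemma mw_sum_char_submodule {N : ℕ} (ψ : AddChar Fq ℂ) (hψ : ψ.IsPrimitive)
    (C : Submodule Fq (Fin N → Fq)) (v : Fin N → Fq) :
    ∑ u : C, ψ (∑ j, (u : Fin N → Fq) j * v j)
      = if v ∈ dualCode C then (Nat.card C : ℂ) else 0 := by
  let L : C →+ Fq :=
    { toFun := fun u => ∑ j, (u : Fin N → Fq) j * v j
      map_zero' := by simp
      map_add' := by
        intro a b
        simp [Pi.add_apply, add_mul, Finset.sum_add_distrib]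
    }
  let φ : AddChar C ℂ := ψ.compAddMonoidHom L
  have hsum : ∑ u : C, ψ (∑ j, (u : Fin N → Fq) j * v j) = ∑ u : C, φ u := rfl
  have hiff : φ = 0 ↔ v ∈ dualCode C := by
    constructor
    · intro h u hu
      by_contra ha
      refine hψ ha ?_
      ext t
      have := DFunLike.congr_fun h (t • (⟨u, hu⟩ : C))
      simp only [AddChar.zero_apply, AddChar.compAddMonoidHom_apply, φ] at this
      have hL : L (t • (⟨u, hu⟩ : C)) = t * ∑ j, u j * v j := by
        simp only [L, AddMonoidHom.coe_mk, ZeroHom.coe_mk]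
        rw [Finset.mul_sum]
        refine Finset.sum_congr rfl fun j _ => ?_
        simp [Pi.smul_apply, smul_eq_mul]
        ring
      rw [hL] at this
      rw [AddChar.mulShift_apply, AddChar.one_apply, mul_comm]
      exact this
    · intro h
      ext u
      have : L u = 0 := h u u.2
      simp only [AddChar.compAddMonoidHom_apply, φ, this, AddChar.map_zero_eq_one,
        AddChar.zero_apply]
  rw [hsum, AddChar.sum_eq_ite]
  by_cases h : v ∈ dualCode C
  · rw [if_pos (hiff.2 h), if_pos h, Nat.card_eq_fintype_card]
  · rw [if_neg (fun hc => h (hiff.1 hc)), if_neg h]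

lemma mw_weight_prod {N m : ℕ} (c : Fin m → Fin N → Fq) (X Y : ℂ) :
    X ^ (N - effLen c) * Y ^ effLen c
      = ∏ j : Fin N, (if ∀ i, c i j = 0 then X else Y) := by
  have hkey := Finset.card_filter_add_card_filter_not
    (s := (univ : Finset (Fin N))) (p := fun j => ∀ i, c i j = 0)
  have h2 : effLen c = (univ.filter fun j => ¬ ∀ i, c i j = 0).card := by
    unfold effLen; congr 1; ext j; simp [not_forall]
  have h3 : (univ.filter fun j => ∀ i, c i j = 0).card = N - effLen c := by
    rw [h2]; simp only [Finset.card_univ, Fintype.card_fin] at hkey; omega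
  rw [Finset.prod_ite, Finset.prod_const, Finset.prod_const, h3, ← h2]

lemma mw_char_sum_eval {m : ℕ} (ψ : AddChar Fq ℂ) (hψ : ψ.IsPrimitive) (w : Fin m → Fq) :
    ∑ z : Fin m → Fq, ψ (∑ i, w i * z i)
      = if ∀ i, w i = 0 then ((Fintype.card Fq : ℂ)) ^ m else 0 := by
  have hfac : ∑ z : Fin m → Fq, ψ (∑ i, w i * z i) = ∏ i, ∑ t : Fq, ψ (w i * t) := by
    rw [Finset.prod_univ_sum]
    rw [Fintype.piFinset_univ]
    exact Finset.sum_congr rfl fun z _ => mw_map_sum ψ univ _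
  have hSi : ∀ i, ∑ t : Fq, ψ (w i * t) = if w i = 0 then (Fintype.card Fq : ℂ) else 0 := by
    intro i
    have h := AddChar.sum_mulShift (ψ := ψ) (w i) hψ
    push_cast at h
    rw [← h]
    exact Fintype.sum_congr _ _ fun t => by rw [mul_comm]
  rw [hfac]
  by_cases h : ∀ i, w i = 0
  · rw [if_pos h]
    rw [Finset.prod_congr rfl fun i _ => (hSi i).trans (if_pos (h i))]
    rw [Finset.prod_const, Finset.card_univ, Fintype.card_fin]
  · rw [if_neg h]
    obtain ⟨i0, hi0⟩ := not_forall.1 h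
    exact Finset.prod_eq_zero (Finset.mem_univ i0) ((hSi i0).trans (if_neg hi0))

lemma mw_ghat {m : ℕ} (ψ : AddChar Fq ℂ) (hψ : ψ.IsPrimitive) (X Y : ℂ) (w : Fin m → Fq) :
    ∑ z : Fin m → Fq, ψ (∑ i, w i * z i) * (if ∀ i, z i = 0 then X else Y)
      = if ∀ i, w i = 0 then X + ((Fintype.card Fq : ℂ) ^ m - 1) * Y else X - Y := by
  have h0univ : (univ.filter fun z : Fin m → Fq => ∀ i, z i = 0) = {0} := by
    ext z; simp [funext_iff, eq_comm]
  have hcard : Fintype.card (Fin m → Fq) = Fintype.card Fq ^ m := by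
    rw [Fintype.card_fun, Fintype.card_fin]
  have hq1 : 1 ≤ Fintype.card Fq ^ m := Nat.one_le_pow _ _ Fintype.card_pos
  have hsplit : ∀ z : Fin m → Fq, z ≠ 0 → ¬ ∀ i, z i = 0 := by
    intro z hz h'; exact hz (funext h')
  -- split off z = 0
  rw [← Finset.add_sum_erase _ _ (Finset.mem_univ (0 : Fin m → Fq))]
  have hz0 : ψ (∑ i, w i * (0 : Fin m → Fq) i) * (if ∀ i, (0 : Fin m → Fq) i = 0 then X else Y)
      = X := by simp
  rw [hz0]
  have hrest : ∑ z ∈ univ.erase (0 : Fin m → Fq), ψ (∑ i, w i * z i) *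
      (if ∀ i, z i = 0 then X else Y)
      = (∑ z ∈ univ.erase (0 : Fin m → Fq), ψ (∑ i, w i * z i)) * Y := by
    rw [Finset.sum_mul]
    refine Finset.sum_congr rfl fun z hz => ?_
    rw [if_neg (hsplit z (Finset.ne_of_mem_erase hz))]
  rw [hrest]
  have herase : ∑ z ∈ univ.erase (0 : Fin m → Fq), ψ (∑ i, w i * z i)
      = (∑ z : Fin m → Fq, ψ (∑ i, w i * z i)) - 1 := by
    rw [← Finset.add_sum_erase _ _ (Finset.mem_univ (0 : Fin m → Fq))]
    simp
  rw [herase, mw_char_sum_eval ψ hψ]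
  by_cases h : ∀ i, w i = 0
  · rw [if_pos h, if_pos h]
  · rw [if_neg h, if_neg h]; ring

lemma mw_prod_ite_zero {m : ℕ} (p : Fin m → Prop) (a : Fin m → ℂ) :
    (∏ i, if p i then a i else 0) = if ∀ i, p i then ∏ i, a i else 0 := by
  by_cases h : ∀ i, p i
  · rw [if_pos h]; exact Finset.prod_congr rfl fun i _ => if_pos (h i)
  · rw [if_neg h]
    obtain ⟨i0, hi0⟩ := not_forall.1 h
    exact Finset.prod_eq_zero (Finset.mem_univ i0) (if_neg hi0)

theorem mtuple_macwilliams {N m : ℕ} (Cs : Fin m → Submodule Fq (Fin N → Fq)) (X Y : ℂ) :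
    Wm (fun i => dualCode (Cs i)) X Y =
      (∏ i, (Nat.card (Cs i) : ℂ))⁻¹ *
        Wm Cs (X + ((Fintype.card Fq : ℂ) ^ m - 1) * Y) (X - Y) := by
  obtain ⟨ψ, hψ⟩ : ∃ ψ : AddChar Fq ℂ, ψ.IsPrimitive :=
    ⟨AddChar.FiniteField.primitiveChar_to_Complex Fq,
     AddChar.FiniteField.primitiveChar_to_Complex_isPrimitive Fq⟩
  set X' := X + ((Fintype.card Fq : ℂ) ^ m - 1) * Y with hX'
  set Y' := X - Y with hY'
  -- notation
  set G : (Fin m → Fin N → Fq) → ℂ :=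
    fun v => ∏ j, (if ∀ i, v i j = 0 then X else Y) with hG
  set T : ℂ := ∑ u : (Π i, Cs i), ∑ v : Fin m → Fin N → Fq,
      ψ (∑ i, ∑ j, (u i : Fin N → Fq) j * v i j) * G v with hT
  -- Claim 1 : LHS as a sum of G
  have claim1 : Wm (fun i => dualCode (Cs i)) X Y
      = ∑ c : (Π i, dualCode (Cs i)), G (fun i => (c i : Fin N → Fq)) := by
    unfold Wm
    exact Finset.sum_congr rfl fun c _ => mw_weight_prod _ X Y
  -- Claim 2+3 : T = Wm Cs X' Y'
  have claim3 : T = Wm Cs X' Y' := by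
    rw [hT]
    unfold Wm
    refine Finset.sum_congr rfl fun u _ => ?_
    have step2 : ∑ v : Fin m → Fin N → Fq,
        ψ (∑ i, ∑ j, (u i : Fin N → Fq) j * v i j) * G v
        = ∏ j, ∑ z : Fin m → Fq,
            ψ (∑ i, (u i : Fin N → Fq) j * z i) * (if ∀ i, z i = 0 then X else Y) := by
      have hps : (∏ j : Fin N, ∑ z ∈ (univ : Finset (Fin m → Fq)),
            ψ (∑ i, (u i : Fin N → Fq) j * z i) * (if ∀ i, z i = 0 then X else Y))
          = ∑ x ∈ Fintype.piFinset (fun _ : Fin N => (univ : Finset (Fin m → Fq))),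
            ∏ j : Fin N, ψ (∑ i, (u i : Fin N → Fq) j * (x j) i) *
              (if ∀ i, (x j) i = 0 then X else Y) :=
        Finset.prod_univ_sum _ _
      rw [hps]
      simp only [Fintype.piFinset_univ]
      refine Fintype.sum_equiv
        (Equiv.piComm fun (_ : Fin m) (_ : Fin N) => Fq)
        (fun v => ψ (∑ i, ∑ j, (u i : Fin N → Fq) j * v i j) * G v)
        (fun x => ∏ j, ψ (∑ i, (u i : Fin N → Fq) j * (x j) i) *
          (if ∀ i, (x j) i = 0 then X else Y)) (fun v => ?_)
      -- v : Fin m → Fin N → Fq ; symm sends it to swap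
      have hsc : (∑ i, ∑ j, (u i : Fin N → Fq) j * v i j)
          = ∑ j, ∑ i, (u i : Fin N → Fq) j * v i j := Finset.sum_comm
      have hchar : ψ (∑ i, ∑ j, (u i : Fin N → Fq) j * v i j)
          = ∏ j, ψ (∑ i, (u i : Fin N → Fq) j * v i j) := by
        rw [hsc, mw_map_sum]
      simp only [Equiv.piComm_apply]
      rw [hchar, hG, ← Finset.prod_mul_distrib]
    rw [step2]
    have step3 : ∀ j, ∑ z : Fin m → Fq,
        ψ (∑ i, (u i : Fin N → Fq) j * z i) * (if ∀ i, z i = 0 then X else Y)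
        = if ∀ i, (u i : Fin N → Fq) j = 0 then X' else Y' :=
      fun j => mw_ghat ψ hψ X Y _
    rw [Finset.prod_congr rfl fun j _ => step3 j]
    exact (mw_weight_prod _ X' Y').symm
  -- Claim 4 : T = (∏ Nat.card) * LHS-sum
  have claim4 : T = (∏ i, (Nat.card (Cs i) : ℂ)) *
      ∑ c : (Π i, dualCode (Cs i)), G (fun i => (c i : Fin N → Fq)) := by
    rw [hT, Finset.sum_comm]
    have inner : ∀ v : Fin m → Fin N → Fq,
        ∑ u : (Π i, Cs i), ψ (∑ i, ∑ j, (u i : Fin N → Fq) j * v i j) * G v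
        = (if ∀ i, v i ∈ dualCode (Cs i) then ∏ i, (Nat.card (Cs i) : ℂ) else 0) * G v := by
      intro v
      rw [← Finset.sum_mul]
      congr 1
      have hfac : ∀ u : (Π i, Cs i), ψ (∑ i, ∑ j, (u i : Fin N → Fq) j * v i j)
          = ∏ i, ψ (∑ j, (u i : Fin N → Fq) j * v i j) := fun u => mw_map_sum ψ univ _
      rw [Finset.sum_congr rfl fun u _ => hfac u]
      have hswap : ∑ u : (Π i, Cs i), ∏ i, ψ (∑ j, (u i : Fin N → Fq) j * v i j)
          = ∏ i, ∑ ui : Cs i, ψ (∑ j, (ui : Fin N → Fq) j * v i j) := by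
        have hps : (∏ i : Fin m, ∑ ui ∈ (univ : Finset (Cs i)),
              ψ (∑ j, (ui : Fin N → Fq) j * v i j))
            = ∑ x ∈ Fintype.piFinset (fun i : Fin m => (univ : Finset (Cs i))),
              ∏ i : Fin m, ψ (∑ j, ((x i : Fin N → Fq)) j * v i j) :=
          Finset.prod_univ_sum _ _
        rw [hps]
        simp only [Fintype.piFinset_univ]
      rw [hswap, Finset.prod_congr rfl fun i _ => mw_sum_char_submodule ψ hψ (Cs i) (v i),
        mw_prod_ite_zero]
    rw [Finset.sum_congr rfl fun v _ => inner v]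
    have collapse : ∑ v : Fin m → Fin N → Fq,
        (if ∀ i, v i ∈ dualCode (Cs i) then ∏ i, (Nat.card (Cs i) : ℂ) else 0) * G v
        = (∏ i, (Nat.card (Cs i) : ℂ)) *
          ∑ v : Fin m → Fin N → Fq, (if ∀ i, v i ∈ dualCode (Cs i) then G v else 0) := by
      rw [Finset.mul_sum]
      refine Finset.sum_congr rfl fun v _ => ?_
      by_cases h : ∀ i, v i ∈ dualCode (Cs i)
      · rw [if_pos h, if_pos h]
      · rw [if_neg h, if_neg h, zero_mul, mul_zero]
    rw [collapse]
    congr 1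
    -- sum over indicator = sum over pi of subtypes
    have hsub : ∑ v : Fin m → Fin N → Fq, (if ∀ i, v i ∈ dualCode (Cs i) then G v else 0)
        = ∑ s : {v : Fin m → Fin N → Fq // ∀ i, v i ∈ dualCode (Cs i)}, G s.1 := by
      rw [← Finset.sum_filter]
      exact Finset.sum_subtype _ (fun v => by simp) G
    rw [hsub]
    refine Fintype.sum_equiv (Equiv.subtypePiEquivPi
      (p := fun i (b : Fin N → Fq) => b ∈ dualCode (Cs i))) _ _ fun s => ?_
    rfl
  -- wrap up
  have hprodne : (∏ i, (Nat.card (Cs i) : ℂ)) ≠ 0 := by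
    refine Finset.prod_ne_zero_iff.2 fun i _ => ?_
    have : 0 < Nat.card (Cs i) := Nat.card_pos
    exact_mod_cast this.ne'
  rw [claim1, eq_inv_mul_iff_mul_eq₀ hprodne, ← claim4, claim3]
end

section
/- Let C ⊆ F_q^N be a linear code of dimension k. Then W^{[m]}_C(X,Y) = Σ_{r=0}^{k} [m]_r · W^{(r)}_C(X,Y), where [m]_r = ∏_{i=0}^{r-1}(q^m - q^i). -/
open Finset
open scoped Classical BigOperators

variable {Fq : Type} [Field Fq] [Fintype Fq]

/-! The map sending an `m`-tuple of codewords to the subspace `D ≤ C` it spans preserves weights: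
the nonzero columns of the tuple are exactly the support of `D`. The tuples spanning a fixed
`r`-dimensional `D` are, in coordinates for `D` and after transposing, the linearly independent
`r`-tuples in `F_q^m`, of which there are `[m]_r`. Summing over `D ≤ C` grouped by dimension gives
the formula. -/

section

open Module Submodule Set

theorem span_range_eq_top_iff_linearIndependent_swap {K ι κ : Type*} [Field K] [Fintype ι]
    [Fintype κ] (c : ι → κ → K) :
    span K (range c) = ⊤ ↔ LinearIndependent K (Function.swap c) := by
  let A : Matrix κ ι K := Matrix.of (Function.swap c)
  have hcols : A.rank = finrank K (span K (range c)) := A.rank_eq_finrank_span_cols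
  have hrows : A.rank = finrank K (span K (range (Function.swap c))) :=
    A.rank_eq_finrank_span_row
  rw [linearIndependent_iff_card_eq_finrank_span, Set.finrank, ← hrows, hcols,
    eq_top_iff_finrank_eq, finrank_fintype_fun_eq_card, eq_comm]

theorem natCast_card_linearIndependent {K V R : Type*} [Field K] [Fintype K] [AddCommGroup V]
    [Module K V] [Finite V] [CommRing R] (k : ℕ) :
    (Nat.card {s : Fin k → V // LinearIndependent K s} : R) =
      ∏ i ∈ Finset.range k,
        ((Fintype.card K : R) ^ finrank K V - (Fintype.card K : R) ^ i) := by
  by_cases hk : k ≤ finrank K V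
  · rw [card_linearIndependent hk, Nat.cast_prod, ← Fin.prod_univ_eq_prod_range]
    refine Finset.prod_congr rfl fun i _ => ?_
    rw [Nat.cast_sub (Nat.pow_le_pow_right Fintype.card_pos (by omega))]
    push_cast; rfl
  · have : IsEmpty {s : Fin k → V // LinearIndependent K s} :=
      ⟨fun s => hk (by simpa using s.2.fintype_card_le_finrank)⟩
    rw [Nat.card_of_isEmpty, Nat.cast_zero, eq_comm]
    exact Finset.prod_eq_zero (Finset.mem_range.2 (not_le.1 hk)) (sub_self _)

theorem span_range_comp_linearEquiv_eq_top_iff {K V W ι : Type*} [Semiring K] [AddCommMonoid V]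
    [Module K V] [AddCommMonoid W] [Module K W] (e : V ≃ₗ[K] W) (c : ι → V) :
    span K (range (e ∘ c)) = ⊤ ↔ span K (range c) = ⊤ := by
  rw [range_comp, ← LinearEquiv.coe_coe, ← Submodule.map_span, Submodule.map_eq_top_iff]

theorem natCast_card_spanning_tuples {K V R : Type*} [Field K] [Fintype K] [AddCommGroup V]
    [Module K V] [FiniteDimensional K V] [CommRing R] (m : ℕ) :
    (Nat.card {c : Fin m → V // span K (range c) = ⊤} : R) =
      ∏ i ∈ Finset.range (finrank K V),
        ((Fintype.card K : R) ^ m - (Fintype.card K : R) ^ i) := by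
  let e : V ≃ₗ[K] (Fin (finrank K V) → K) := (finBasis K V).equivFun
  let toCoords : {c : Fin m → V // span K (range c) = ⊤} ≃
      {s : Fin (finrank K V) → Fin m → K // LinearIndependent K s} :=
    Equiv.subtypeEquiv (((Equiv.refl _).arrowCongr e.toEquiv).trans (Equiv.functionSwap _ _ _))
      fun c => by
        rw [← span_range_comp_linearEquiv_eq_top_iff e,
          span_range_eq_top_iff_linearIndependent_swap]
        rfl
  have : Finite V := Module.finite_of_finite K
  rw [Nat.card_congr toCoords, natCast_card_linearIndependent, finrank_fin_fun]

def spanFiberEquiv {K M ι : Type*} [Semiring K] [AddCommMonoid M] [Module K M]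
    {C D : Submodule K M} (hDC : D ≤ C) :
    {c : ι → C // span K (range fun i => (c i : M)) = D} ≃
      {d : ι → D // span K (range d) = ⊤} where
  toFun c := ⟨fun i => ⟨c.1 i, c.2.le (subset_span (mem_range_self i))⟩,
    (span_range_subtype_eq_top_iff _ _).2 c.2⟩
  invFun d := ⟨fun i => ⟨d.1 i, hDC (d.1 i).2⟩,
    (span_range_subtype_eq_top_iff D fun i => (d.1 i).2).1 d.2⟩
  left_inv _ := rfl
  right_inv _ := rfl

theorem sum_span_range_eq_sum_le {K M R : Type*} [Field K] [Fintype K] [AddCommGroup M]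
    [Module K M] [Fintype M] [CommRing R] (m : ℕ) (C : Submodule K M)
    (f : Submodule K M → R) :
    ∑ c : Fin m → C, f (span K (range fun i => (c i : M))) =
      ∑ D with D ≤ C,
        (∏ i ∈ Finset.range (finrank K D),
          ((Fintype.card K : R) ^ m - (Fintype.card K : R) ^ i)) * f D := by
  rw [← Finset.sum_fiberwise_of_maps_to (t := {D | D ≤ C}) fun c _ => ?_]
  · refine Finset.sum_congr rfl fun D hD => ?_
    rw [Finset.sum_congr rfl fun c hc => congrArg f (Finset.mem_filter.1 hc).2, Finset.sum_const,
      nsmul_eq_mul, ← Fintype.card_subtype, ← Nat.card_eq_fintype_card,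
      Nat.card_congr (spanFiberEquiv (Finset.mem_filter.1 hD).2), natCast_card_spanning_tuples]
  · simp [span_le, range_subset_iff]

end

open Submodule Set in
theorem effLen_eq_suppWt_span {N m : ℕ} (c : Fin m → Fin N → Fq) :
    effLen c = suppWt (span Fq (range c)) := by
  unfold effLen suppWt
  congr 1
  refine Finset.filter_congr fun j _ =>
    ⟨fun ⟨i, hi⟩ => ⟨c i, subset_span (mem_range_self i), hi⟩, ?_⟩
  rintro ⟨v, hv, hvj⟩
  by_contra! h
  exact hvj (span_le (p := LinearMap.ker (LinearMap.proj j)).2 (range_subset_iff.2 h) hv)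

theorem Wr_eq_sum {N : ℕ} (C : Submodule Fq (Fin N → Fq)) (r : ℕ) (X Y : ℂ) :
    Wr C r X Y =
      ∑ D with D ≤ C ∧ Module.finrank Fq D = r, X ^ (N - suppWt D) * Y ^ suppWt D := by
  rw [Wr, ← finsum_mem_coe_finset, coe_filter]
  simp only [mem_univ, true_and]

theorem sum_le_eq_sum_range_mul_Wr {N k : ℕ} {C : Submodule Fq (Fin N → Fq)}
    (hC : Module.finrank Fq C = k) (f : ℕ → ℂ) (X Y : ℂ) :
    ∑ D with D ≤ C, f (Module.finrank Fq D) * (X ^ (N - suppWt D) * Y ^ suppWt D) =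
      ∑ r ∈ range (k + 1), f r * Wr C r X Y := by
  rw [← sum_fiberwise_of_maps_to (g := fun D : Submodule Fq (Fin N → Fq) => Module.finrank Fq D)
    (t := range (k + 1))
    fun D hD => mem_range_succ_iff.2 (hC ▸ Submodule.finrank_mono (mem_filter.1 hD).2)]
  refine sum_congr rfl fun r _ => ?_
  rw [Wr_eq_sum, mul_sum, filter_filter]
  exact sum_congr rfl fun D hD => by rw [(mem_filter.1 hD).2.2]

theorem mtuple_eq_sum_support_enumerators {N k m : ℕ} (C : Submodule Fq (Fin N → Fq))
    (hC : Module.finrank Fq C = k) (X Y : ℂ) :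
    Wm (fun _ : Fin m => C) X Y =
      ∑ r ∈ Finset.range (k + 1),
        (∏ i ∈ Finset.range r,
            ((Fintype.card Fq : ℂ) ^ m - (Fintype.card Fq : ℂ) ^ i)) * Wr C r X Y := by
  let g (D : Submodule Fq (Fin N → Fq)) : ℂ := X ^ (N - suppWt D) * Y ^ suppWt D
  calc Wm (fun _ : Fin m => C) X Y
      = ∑ c : Fin m → C, g (Submodule.span Fq (Set.range fun i => (c i : Fin N → Fq))) := by
        simp only [Wm, effLen_eq_suppWt_span, g]
    _ = _ := sum_span_range_eq_sum_le m C g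
    _ = _ := sum_le_eq_sum_range_mul_Wr hC
        (fun r => ∏ i ∈ range r, ((Fintype.card Fq : ℂ) ^ m - (Fintype.card Fq : ℂ) ^ i))
        X Y
end

section
/- Let C_1 be a linear code over F_2 of length N and let E = R^⊥ be the even weight code of length N. Then W^{[2]}_{C_1,E}(X,Y) = (X-Y)^N/2 + W_{C_1}(X+Y, 2Y)/2. -/
open Finset
open scoped Classical BigOperators

variable {Fq : Type} [Field Fq] [Fintype Fq]

section Aux

open Finset
open scoped Classical BigOperators

lemma sum_zmod2' (g : ZMod 2 → ℂ) : ∑ v, g v = g 0 + g 1 := Fin.sum_univ_two g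

noncomputable def chiZ : ZMod 2 → ℂ := fun x => if x = 0 then 1 else -1

lemma chiZ_add (x y : ZMod 2) : chiZ (x + y) = chiZ x * chiZ y := by
  have h : ∀ z : ZMod 2, z = 0 ∨ z = 1 := by decide
  rcases h x with rfl | rfl <;> rcases h y with rfl | rfl <;>
    simp [chiZ, show (1 + 1 : ZMod 2) = 0 from rfl]

lemma chiZ_prod {ι : Type*} (s : Finset ι) (f : ι → ZMod 2) :
    ∏ j ∈ s, chiZ (f j) = chiZ (∑ j ∈ s, f j) := by
  induction s using Finset.cons_induction with
  | empty => simp [chiZ]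
  | cons a s ha ih => rw [Finset.prod_cons, Finset.sum_cons, chiZ_add, ih]

lemma prod_ite_wt' {N : ℕ} (p : Fin N → Prop) [DecidablePred p] (X Y : ℂ) :
    (∏ j, if p j then Y else X) = X ^ (N - (univ.filter p).card) * Y ^ (univ.filter p).card := by
  rw [Finset.prod_ite, Finset.prod_const, Finset.prod_const, mul_comm]
  congr 2
  have := Finset.card_filter_add_card_filter_not (s := (univ : Finset (Fin N))) (p := p)
  simp at this ⊢
  omega

lemma innerSumE {N : ℕ} (a : Fin N → ZMod 2) (X Y : ℂ) :
    (∑ b : Fin N → ZMod 2, if (∑ j, b j) = 0 then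
        X ^ (N - (univ.filter fun j => a j ≠ 0 ∨ b j ≠ 0).card) *
        Y ^ (univ.filter fun j => a j ≠ 0 ∨ b j ≠ 0).card else 0)
    = ((X + Y) ^ (N - wt a) * (2 * Y) ^ wt a
        + (if a = 0 then (X - Y) ^ N else 0)) / 2 := by
  have key : ∀ b : Fin N → ZMod 2,
      (if (∑ j, b j) = 0 then
        X ^ (N - (univ.filter fun j => a j ≠ 0 ∨ b j ≠ 0).card) *
        Y ^ (univ.filter fun j => a j ≠ 0 ∨ b j ≠ 0).card else 0)
      = ((∏ j, if a j ≠ 0 ∨ b j ≠ 0 then Y else X)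
          + ∏ j, chiZ (b j) * (if a j ≠ 0 ∨ b j ≠ 0 then Y else X)) / 2 := by
    intro b
    rw [Finset.prod_mul_distrib, chiZ_prod, ← prod_ite_wt']
    by_cases h : (∑ j, b j) = 0
    · simp only [if_pos h, chiZ, if_pos rfl]; ring
    · simp only [if_neg h, chiZ, if_neg h]; ring
  rw [Finset.sum_congr rfl (fun b _ => key b), ← Finset.sum_div, Finset.sum_add_distrib]
  have e1 : (∑ b : Fin N → ZMod 2, ∏ j, if a j ≠ 0 ∨ b j ≠ 0 then Y else X)
      = (X + Y) ^ (N - (univ.filter fun j => a j ≠ 0).card)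
        * (2 * Y) ^ (univ.filter fun j => a j ≠ 0).card := by
    rw [← Fintype.prod_sum (fun j (v : ZMod 2) => if a j ≠ 0 ∨ v ≠ 0 then Y else X)]
    have h1 : ∀ j, (∑ v : ZMod 2, if a j ≠ 0 ∨ v ≠ 0 then Y else X)
        = if a j ≠ 0 then 2 * Y else X + Y := by
      intro j
      rw [sum_zmod2']
      by_cases h : a j ≠ 0 <;> simp [h] <;> ring
    rw [Finset.prod_congr rfl (fun j _ => h1 j), prod_ite_wt']
  have e2 : (∑ b : Fin N → ZMod 2, ∏ j, chiZ (b j) * (if a j ≠ 0 ∨ b j ≠ 0 then Y else X))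
      = (if a = 0 then (X - Y) ^ N else 0) := by
    rw [← Fintype.prod_sum (fun j (v : ZMod 2) => chiZ v * (if a j ≠ 0 ∨ v ≠ 0 then Y else X))]
    have h2 : ∀ j, (∑ v : ZMod 2, chiZ v * (if a j ≠ 0 ∨ v ≠ 0 then Y else X))
        = if a j ≠ 0 then 0 else X - Y := by
      intro j
      rw [sum_zmod2']
      by_cases h : a j ≠ 0 <;> simp [h, chiZ] <;> ring
    rw [Finset.prod_congr rfl (fun j _ => h2 j)]
    by_cases ha : a = 0
    · subst ha; simp
    · rw [if_neg ha]
      obtain ⟨j, hj⟩ : ∃ j, a j ≠ 0 := by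
        by_contra h
        push_neg at h
        exact ha (funext fun j => h j)
      exact Finset.prod_eq_zero (Finset.mem_univ j) (by simp [hj])
  rw [e1, e2]
  have hwt : wt a = (univ.filter fun j => a j ≠ 0).card := by
    unfold wt; congr
  rw [hwt]

end Aux

lemma mem_evenCode {N : ℕ} (v : Fin N → ZMod 2) :
    v ∈ dualCode (Submodule.span (ZMod 2) {(fun _ => 1 : Fin N → ZMod 2)})
      ↔ (∑ j, v j) = 0 := by
  constructor
  · intro h
    have := h (fun _ => 1) (Submodule.mem_span_singleton_self _)
    simpa using this
  · intro h u hu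
    obtain ⟨c, rfl⟩ := Submodule.mem_span_singleton.mp hu
    simp [Pi.smul_apply, smul_eq_mul, mul_comm, ← Finset.mul_sum, h]


theorem pair_with_even_weight_code {N : ℕ}
    (C1 : Submodule (ZMod 2) (Fin N → ZMod 2)) (X Y : ℂ) :
    Wm ![C1, dualCode (Submodule.span (ZMod 2) {(fun _ => 1 : Fin N → ZMod 2)})] X Y
      = (X - Y) ^ N / 2 + W C1 (X + Y) (2 * Y) / 2 := by
  classical
  set E := dualCode (Submodule.span (ZMod 2) {(fun _ => 1 : Fin N → ZMod 2)}) with hE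
  have step1 : Wm ![C1, E] X Y = ∑ p : C1 × E,
      X ^ (N - (Finset.univ.filter fun j => (p.1 : Fin N → ZMod 2) j ≠ 0 ∨
            (p.2 : Fin N → ZMod 2) j ≠ 0).card)
        * Y ^ (Finset.univ.filter fun j => (p.1 : Fin N → ZMod 2) j ≠ 0 ∨
            (p.2 : Fin N → ZMod 2) j ≠ 0).card := by
    rw [Wm]
    apply Fintype.sum_equiv (piFinTwoEquiv fun i => (![C1, E] i : Submodule (ZMod 2) (Fin N → ZMod 2)))
    intro c
    have heff : effLen (fun i => ((c i : Fin N → ZMod 2))) =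
        (Finset.univ.filter fun j => (c 0 : Fin N → ZMod 2) j ≠ 0 ∨
          (c 1 : Fin N → ZMod 2) j ≠ 0).card := by
      unfold effLen
      congr 1
      ext j
      simp only [Finset.mem_filter, Finset.mem_univ, true_and]
      exact ⟨fun ⟨i, hi⟩ => by fin_cases i <;> [exact Or.inl hi; exact Or.inr hi],
        fun h => h.elim (fun h => ⟨0, h⟩) (fun h => ⟨1, h⟩)⟩
    rw [heff]
    rfl
  rw [step1, Fintype.sum_prod_type]
  have step2 : ∀ a : C1,
      (∑ b : E, X ^ (N - (Finset.univ.filter fun j => (a : Fin N → ZMod 2) j ≠ 0 ∨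
            (b : Fin N → ZMod 2) j ≠ 0).card)
        * Y ^ (Finset.univ.filter fun j => (a : Fin N → ZMod 2) j ≠ 0 ∨
            (b : Fin N → ZMod 2) j ≠ 0).card)
      = ((X + Y) ^ (N - wt (a : Fin N → ZMod 2)) * (2 * Y) ^ wt (a : Fin N → ZMod 2)
          + (if (a : Fin N → ZMod 2) = 0 then (X - Y) ^ N else 0)) / 2 := by
    intro a
    have hsub := Finset.sum_subtype (F := (inferInstance : Fintype E)) (p := fun b => b ∈ E)
      (Finset.univ.filter fun b : Fin N → ZMod 2 => (∑ j, b j) = 0)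
      (fun b => by simp [hE, mem_evenCode])
      (fun b => X ^ (N - (Finset.univ.filter fun j => (a : Fin N → ZMod 2) j ≠ 0 ∨ b j ≠ 0).card)
        * Y ^ (Finset.univ.filter fun j => (a : Fin N → ZMod 2) j ≠ 0 ∨ b j ≠ 0).card)
    rw [← hsub, Finset.sum_filter]
    exact innerSumE _ X Y
  simp only [step2]
  rw [← Finset.sum_div, Finset.sum_add_distrib]
  have e3 : (∑ a : C1, if (a : Fin N → ZMod 2) = 0 then (X - Y) ^ N else 0) = (X - Y) ^ N := by
    have : ∀ a : C1, ((a : Fin N → ZMod 2) = 0) ↔ a = 0 := fun a =>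
      ⟨fun h => Subtype.ext h, fun h => by rw [h]; rfl⟩
    rw [Finset.sum_congr rfl (fun a _ => by rw [if_congr (this a) rfl rfl])]
    simp
  rw [e3, W]
  ring
end
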